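/- Let g be a complex simple Lie algebra regarded as a real Lie algebra, and k a compact real form. If h is a real Lie subalgebra of g containing k, then h = k or h = g. -/
import Mathlib


/-- Let `g` be a complex simple Lie algebra regarded as a real Lie algebra and
`k` a compact real form (so `g = k ⊕ ik` as real vector spaces, with negative definite
Killing form on `k`).  If `h` is a real Lie subalgebra of `g` containing `k`, then `h = k`
or `h = g`. -/
theorem stmt_7 {g : Type*} [LieRing g] [LieAlgebra ℝ g] [LieAlgebra ℂ g]
    [IsScalarTower ℝ ℂ g] [FiniteDimensional ℂ g] [FiniteDimensional ℝ g]
    [LieAlgebra.IsSimple ℂ g]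
    (k : LieSubalgebra ℝ g)
    (hrealform : Function.Bijective
      (fun p : k × k => (p.1 : g) + Complex.I • (p.2 : g)))
    (hcompact : ∀ x : k, x ≠ 0 → killingForm ℝ k x x < 0)
    (h : LieSubalgebra ℝ g) (hkh : k ≤ h) :
    h = k ∨ h = ⊤ := by
  classical
  have hre : ∀ (r : ℝ) (x : g), (r : ℂ) • x = r • x := fun r x => algebraMap_smul ℂ r x
  -- decomposition
  have hdecomp : ∀ x : g, ∃ a b : g, a ∈ k ∧ b ∈ k ∧ x = a + Complex.I • b := by
    intro x
    obtain ⟨⟨a, b⟩, hab⟩ := hrealform.2 x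
    exact ⟨a, b, a.2, b.2, hab.symm⟩
  -- the "imaginary part" set
  have m_mem : ∀ {z : g}, z ∈ k → Complex.I • z ∈ h → ∀ u ∈ k, ⁅u, z⁆ ∈ k ∧ Complex.I • ⁅u, z⁆ ∈ h := by
    intro z hz1 hz2 u hu
    refine ⟨k.lie_mem hu hz1, ?_⟩
    rw [← lie_smul]
    exact h.lie_mem (hkh hu) hz2
  set m : Submodule ℝ g :=
    { carrier := {b | b ∈ k ∧ Complex.I • b ∈ h}
      add_mem' := by
        rintro a b ⟨ha1, ha2⟩ ⟨hb1, hb2⟩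
        exact ⟨k.add_mem ha1 hb1, by rw [smul_add]; exact h.add_mem ha2 hb2⟩
      zero_mem' := ⟨k.zero_mem, by simpa using h.zero_mem⟩
      smul_mem' := by
        rintro r b ⟨hb1, hb2⟩
        exact ⟨k.smul_mem r hb1, by rw [smul_comm]; exact h.smul_mem r hb2⟩ } with hmdef
  have hmk : ∀ {z : g}, z ∈ m → ∀ u ∈ k, ⁅u, z⁆ ∈ m := by
    intro z hz u hu
    exact m_mem hz.1 hz.2 u hu
  have hmsub : ∀ {z : g}, z ∈ m → z ∈ k := fun hz => hz.1
  -- the complex ideal m + I m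
  have key : ∀ c : ℂ, ∀ a b : g, c • (a + Complex.I • b)
      = (c.re • a - c.im • b) + Complex.I • (c.im • a + c.re • b) := by
    intro c a b
    have e1 : c = (c.re : ℂ) + (c.im : ℂ) * Complex.I := (Complex.re_add_im c).symm
    have e2 : c * Complex.I = ((-c.im : ℝ) : ℂ) + (c.re : ℂ) * Complex.I := by
      simp [Complex.ext_iff]
    calc c • (a + Complex.I • b) = c • a + (c * Complex.I) • b := by
          rw [smul_add, smul_smul]
      _ = ((c.re : ℂ) + (c.im : ℂ) * Complex.I) • a
            + (((-c.im : ℝ) : ℂ) + (c.re : ℂ) * Complex.I) • b := by rw [← e1, ← e2]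
      _ = _ := by
          rw [add_smul, add_smul, mul_comm ((c.im : ℂ)) Complex.I,
            mul_comm ((c.re : ℂ)) Complex.I, mul_smul, mul_smul, hre, hre, hre, hre,
            smul_add (Complex.I), neg_smul, sub_eq_add_neg]
          abel
  set M : LieIdeal ℂ g :=
    { carrier := {x | ∃ a b : g, a ∈ m ∧ b ∈ m ∧ x = a + Complex.I • b}
      add_mem' := by
        rintro x y ⟨a, b, ha, hb, rfl⟩ ⟨a', b', ha', hb', rfl⟩
        refine ⟨a + a', b + b', m.add_mem ha ha', m.add_mem hb hb', ?_⟩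
        rw [smul_add]; abel
      zero_mem' := ⟨0, 0, m.zero_mem, m.zero_mem, by simp⟩
      smul_mem' := by
        rintro c x ⟨a, b, ha, hb, rfl⟩
        refine ⟨c.re • a - c.im • b, c.im • a + c.re • b,
          m.sub_mem (m.smul_mem _ ha) (m.smul_mem _ hb),
          m.add_mem (m.smul_mem _ ha) (m.smul_mem _ hb), key c a b⟩
      lie_mem := by
        rintro x y ⟨a, b, ha, hb, rfl⟩
        obtain ⟨u, v, hu, hv, rfl⟩ := hdecomp x
        refine ⟨⁅u, a⁆ - ⁅v, b⁆, ⁅v, a⁆ + ⁅u, b⁆,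
          m.sub_mem (hmk ha u hu) (hmk hb v hv),
          m.add_mem (hmk ha v hv) (hmk hb u hu), ?_⟩
        rw [lie_add, add_lie, add_lie, lie_smul, lie_smul, smul_lie, smul_lie,
          smul_smul, Complex.I_mul_I, neg_one_smul, smul_add]
        abel } with hMdef
  have hMmem : ∀ {x : g}, x ∈ M ↔ ∃ a b : g, a ∈ m ∧ b ∈ m ∧ x = a + Complex.I • b := by
    intro x; rfl
  rcases LieAlgebra.IsSimple.eq_bot_or_eq_top M with hM | hM
  · -- M = ⊥ : h = k
    left
    refine le_antisymm (fun x hx => ?_) hkh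
    obtain ⟨a, b, ha, hb, rfl⟩ := hdecomp x
    have hIb : Complex.I • b ∈ h := by
      have : (a + Complex.I • b) - a ∈ h := h.sub_mem hx (hkh ha)
      simpa using this
    have hbm : b ∈ m := ⟨hb, hIb⟩
    have : b ∈ M := hMmem.2 ⟨b, 0, hbm, m.zero_mem, by simp⟩
    rw [hM] at this
    have hb0 : b = 0 := this
    simp [hb0]
    exact ha
  · -- M = ⊤ : h = ⊤
    right
    refine le_antisymm le_top (fun y _ => ?_)
    obtain ⟨a, b, ha, hb, rfl⟩ := hdecomp y
    -- b ∈ k, and since M = ⊤, b = p + I q with p,q ∈ m; uniqueness gives b = p ∈ m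
    have hbM : b ∈ M := by rw [hM]; trivial
    obtain ⟨p, q, hp, hq, hpq⟩ := hMmem.1 hbM
    have := hrealform.1 (a₁ := (⟨b, hb⟩, (0 : k))) (a₂ := (⟨p, hmsub hp⟩, ⟨q, hmsub hq⟩)) (by
      simpa using hpq)
    have hbp : b = p := congrArg (fun t => ((Prod.fst t : k) : g)) this
    have hIb : Complex.I • b ∈ h := by rw [hbp]; exact hp.2
    exact h.add_mem (hkh ha) hIb
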